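/- arXiv:2101.03388 — 2 statements merged into one kernel-verified Lean document; each statement's English description precedes it below -/
import Mathlib

section
/- Let f_i(x) = D_i + c_a(|x - α_i|_m) for i = 1, …, k, where c_a is convex and increasing and |y|_m is circular distance. For each i, the set R_i = {x ∈ [0,360) : f_i(x) ≤ f_j(x) for all j} (the 'area of responsibility' of edge i) is a circular interval (an arc), i.e., if β₁, β₂ ∈ R_i then one of the two arcs from β₁ to β₂ is contained in R_i. -/
noncomputable def mind (t : ℝ) : ℝ := min |t| (360 - |t|)

noncomputable def hfun (c : ℝ → ℝ) (γ u : ℝ) : ℝ := c (mind u) - c (mind (u - γ))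

lemma mind_of_nonneg (t : ℝ) (h0 : 0 ≤ t) (h1 : t ≤ 180) : mind t = t := by
  unfold mind; rw [abs_of_nonneg h0]; exact min_eq_left (by linarith)

lemma mind_of_nonpos (t : ℝ) (h0 : t ≤ 0) (h1 : -180 ≤ t) : mind t = -t := by
  unfold mind; rw [abs_of_nonpos h0]; exact min_eq_left (by linarith)

lemma mind_big (t : ℝ) (h1 : -360 ≤ t) (h0 : t ≤ -180) : mind t = 360 + t := by
  unfold mind; rw [abs_of_nonpos (by linarith), min_eq_right (by linarith)]; ring

lemma mind_neg (t : ℝ) : mind (-t) = mind t := by unfold mind; rw [abs_neg]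

lemma mind_congr (s t : ℝ) (hs : |s| ≤ 360) (ht : |t| ≤ 360)
    (h : s = t ∨ s = t + 360 ∨ s = t - 360 ∨ s = t + 720 ∨ s = t - 720) :
    mind s = mind t := by
  rw [abs_le] at hs ht
  rcases h with h | h | h | h | h <;> subst h
  · rfl
  · unfold mind
    rw [abs_of_nonneg (by linarith : (0:ℝ) ≤ t + 360),
        abs_of_nonpos (by linarith : t ≤ 0), min_comm]
    congr 1 <;> ring
  · unfold mind
    rw [abs_of_nonpos (by linarith : t - 360 ≤ 0),
        abs_of_nonneg (by linarith : (0:ℝ) ≤ t), min_comm]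
    congr 1 <;> ring
  · have h1 : t = -360 := le_antisymm (by linarith) (by linarith)
    subst h1; norm_num [mind]
  · have h1 : t = 360 := le_antisymm (by linarith) (by linarith)
    subst h1; norm_num [mind]

lemma sumlem (c : ℝ → ℝ) (hconv : ConvexOn ℝ (Set.Icc (0:ℝ) 180) c)
    (a b γ : ℝ) (ha : 0 ≤ a) (hab : a ≤ b) (hγ : 0 ≤ γ) (hb : b + γ ≤ 180) :
    c (a + γ) + c b ≤ c a + c (b + γ) := by
  rcases eq_or_lt_of_le (show a ≤ b + γ by linarith) with heq | hlt
  · have h1 : γ = 0 := by linarith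
    have h2 : a = b := by linarith
    subst h2; rw [h1]; norm_num
  · have hTpos : (0:ℝ) < b + γ - a := by linarith
    have hT0 : b + γ - a ≠ 0 := ne_of_gt hTpos
    have hmem1 : a ∈ Set.Icc (0:ℝ) 180 := ⟨ha, by linarith⟩
    have hmem2 : b + γ ∈ Set.Icc (0:ℝ) 180 := ⟨by linarith, hb⟩
    have hl1 : 0 ≤ γ / (b + γ - a) := div_nonneg hγ hTpos.le
    have hl2 : 0 ≤ 1 - γ / (b + γ - a) := by
      rw [sub_nonneg]
      exact (div_le_one hTpos).mpr (by linarith)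
    have c1 := hconv.2 hmem1 hmem2 hl2 hl1 (by ring)
    have c2 := hconv.2 hmem1 hmem2 hl1 hl2 (by ring)
    have e1 : (1 - γ / (b + γ - a)) • a + (γ / (b + γ - a)) • (b + γ) = a + γ := by
      simp only [smul_eq_mul]
      field_simp
      ring
    have e2 : (γ / (b + γ - a)) • a + (1 - γ / (b + γ - a)) • (b + γ) = b := by
      simp only [smul_eq_mul]
      field_simp
      ring
    rw [e1] at c1
    rw [e2] at c2
    simp only [smul_eq_mul] at c1 c2
    nlinarith [c1, c2]

section Steps

variable (c : ℝ → ℝ)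

lemma stepA (hconv : ConvexOn ℝ (Set.Icc (0:ℝ) 180) c)
    (γ : ℝ) (hγ0 : 0 ≤ γ) (hγ1 : γ ≤ 180) (u₁ u₂ : ℝ)
    (h1 : γ - 180 ≤ u₁) (h12 : u₁ ≤ u₂) (h2 : u₂ ≤ 0) :
    hfun c γ u₁ ≤ hfun c γ u₂ := by
  unfold hfun
  rw [mind_of_nonpos u₁ (by linarith) (by linarith),
      mind_of_nonpos u₂ (by linarith) (by linarith),
      mind_of_nonpos (u₁ - γ) (by linarith) (by linarith),
      mind_of_nonpos (u₂ - γ) (by linarith) (by linarith),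
      show -(u₁ - γ) = -u₁ + γ from by ring,
      show -(u₂ - γ) = -u₂ + γ from by ring]
  have := sumlem c hconv (-u₂) (-u₁) γ (by linarith) (by linarith) hγ0 (by linarith)
  linarith

lemma stepB (hmono : MonotoneOn c (Set.Icc (0:ℝ) 180))
    (γ : ℝ) (hγ1 : γ ≤ 180) (u₁ u₂ : ℝ)
    (h1 : 0 ≤ u₁) (h12 : u₁ ≤ u₂) (h2 : u₂ ≤ γ) :
    hfun c γ u₁ ≤ hfun c γ u₂ := by
  unfold hfun
  rw [mind_of_nonneg u₁ h1 (by linarith),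
      mind_of_nonneg u₂ (by linarith) (by linarith),
      mind_of_nonpos (u₁ - γ) (by linarith) (by linarith),
      mind_of_nonpos (u₂ - γ) (by linarith) (by linarith),
      show -(u₁ - γ) = γ - u₁ from by ring,
      show -(u₂ - γ) = γ - u₂ from by ring]
  have m1 := hmono (Set.mem_Icc.mpr ⟨h1, by linarith⟩)
    (Set.mem_Icc.mpr ⟨by linarith, by linarith⟩) h12
  have m2 := hmono (Set.mem_Icc.mpr ⟨by linarith, by linarith⟩)
    (Set.mem_Icc.mpr ⟨by linarith, by linarith⟩) (by linarith : γ - u₂ ≤ γ - u₁)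
  linarith

lemma stepC (hconv : ConvexOn ℝ (Set.Icc (0:ℝ) 180) c)
    (γ : ℝ) (hγ0 : 0 ≤ γ) (u₁ u₂ : ℝ)
    (h1 : γ ≤ u₁) (h12 : u₁ ≤ u₂) (h2 : u₂ ≤ 180) :
    hfun c γ u₁ ≤ hfun c γ u₂ := by
  unfold hfun
  rw [mind_of_nonneg u₁ (by linarith) (by linarith),
      mind_of_nonneg u₂ (by linarith) h2,
      mind_of_nonneg (u₁ - γ) (by linarith) (by linarith),
      mind_of_nonneg (u₂ - γ) (by linarith) (by linarith)]
  have := sumlem c hconv (u₁ - γ) (u₂ - γ) γ (by linarith) (by linarith) hγ0 (by linarith)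
  rw [show u₁ - γ + γ = u₁ from by ring, show u₂ - γ + γ = u₂ from by ring] at this
  linarith

lemma stepNeg (hmono : MonotoneOn c (Set.Icc (0:ℝ) 180))
    (γ : ℝ) (hγ0 : 0 ≤ γ) (hγ1 : γ ≤ 180) (u₁ u₂ : ℝ)
    (h1 : -180 ≤ u₁) (h12 : u₁ ≤ u₂) (h2 : u₂ ≤ γ - 180) :
    hfun c γ u₂ ≤ hfun c γ u₁ := by
  unfold hfun
  rw [mind_of_nonpos u₁ (by linarith) h1,
      mind_of_nonpos u₂ (by linarith) (by linarith),
      mind_big (u₁ - γ) (by linarith) (by linarith),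
      mind_big (u₂ - γ) (by linarith) (by linarith)]
  have m1 := hmono (Set.mem_Icc.mpr ⟨by linarith, by linarith⟩)
    (Set.mem_Icc.mpr ⟨by linarith, by linarith⟩) (by linarith : -u₂ ≤ -u₁)
  have m2 := hmono (Set.mem_Icc.mpr ⟨by linarith, by linarith⟩)
    (Set.mem_Icc.mpr ⟨by linarith, by linarith⟩)
    (by linarith : 360 + (u₁ - γ) ≤ 360 + (u₂ - γ))
  linarith

lemma monoPos (hconv : ConvexOn ℝ (Set.Icc (0:ℝ) 180) c)
    (hmono : MonotoneOn c (Set.Icc (0:ℝ) 180))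
    (γ : ℝ) (hγ0 : 0 ≤ γ) (hγ1 : γ ≤ 180) (u₁ u₂ : ℝ)
    (h1 : γ - 180 ≤ u₁) (h12 : u₁ ≤ u₂) (h2 : u₂ ≤ 180) :
    hfun c γ u₁ ≤ hfun c γ u₂ := by
  have mono2 : ∀ v₁ v₂ : ℝ, 0 ≤ v₁ → v₁ ≤ v₂ → v₂ ≤ 180 → hfun c γ v₁ ≤ hfun c γ v₂ := by
    intro v₁ v₂ g1 g12 g2
    rcases le_total v₂ γ with h | h
    · exact stepB c hmono γ hγ1 v₁ v₂ g1 g12 h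
    · rcases le_total γ v₁ with h' | h'
      · exact stepC c hconv γ hγ0 v₁ v₂ h' g12 g2
      · exact le_trans (stepB c hmono γ hγ1 v₁ γ g1 h' le_rfl)
          (stepC c hconv γ hγ0 γ v₂ le_rfl h g2)
  rcases le_total u₂ 0 with h | h
  · exact stepA c hconv γ hγ0 hγ1 u₁ u₂ h1 h12 h
  · rcases le_total 0 u₁ with h' | h'
    · exact mono2 u₁ u₂ h' h12 h2
    · exact le_trans (stepA c hconv γ hγ0 hγ1 u₁ 0 h1 h' le_rfl) (mono2 0 u₂ le_rfl h h2)

lemma core (hconv : ConvexOn ℝ (Set.Icc (0:ℝ) 180) c)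
    (hmono : MonotoneOn c (Set.Icc (0:ℝ) 180))
    (γ : ℝ) (hγl : -180 ≤ γ) (hγr : γ ≤ 180)
    (a b x : ℝ) (ha : -180 ≤ a) (hb : b ≤ 180) (hax : a ≤ x) (hxb : x ≤ b) :
    hfun c γ x ≤ max (hfun c γ a) (hfun c γ b) := by
  have corePos : ∀ (γ' a' b' x' : ℝ), 0 ≤ γ' → γ' ≤ 180 → -180 ≤ a' → b' ≤ 180 →
      a' ≤ x' → x' ≤ b' → hfun c γ' x' ≤ max (hfun c γ' a') (hfun c γ' b') := by
    intro γ' a' b' x' g0 g1 ga gb gax gxb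
    rcases le_total x' (γ' - 180) with h | h
    · exact le_max_of_le_left (stepNeg c hmono γ' g0 g1 a' x' ga gax h)
    · exact le_max_of_le_right (monoPos c hconv hmono γ' g0 g1 x' b' h gxb gb)
  rcases le_total 0 γ with h | h
  · exact corePos γ a b x h hγr ha hb hax hxb
  · have hneg : ∀ u : ℝ, hfun c γ u = hfun c (-γ) (-u) := by
      intro u
      unfold hfun
      rw [show -u - -γ = -(u - γ) from by ring, mind_neg, mind_neg]
    rw [hneg x, hneg a, hneg b, max_comm]
    exact corePos (-γ) (-b) (-a) (-x) (by linarith) (by linarith) (by linarith)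
      (by linarith) (by linarith) (by linarith)

end Steps

theorem area_of_responsibility_is_arc
    (k : ℕ) (c_a : ℝ → ℝ)
    (hconv : ConvexOn ℝ (Set.Icc (0:ℝ) 180) c_a)
    (hmono : MonotoneOn c_a (Set.Icc (0:ℝ) 180))
    (D : Fin k → ℝ) (α : Fin k → ℝ)
    (hα : ∀ j, α j ∈ Set.Ico (0:ℝ) 360) (hdist : Function.Injective α)
    (f : Fin k → ℝ → ℝ)
    (hf : ∀ j x, f j x = D j + c_a (min |x - α j| (360 - |x - α j|)))
    (i : Fin k)
    (R : Set ℝ) (hR : R = {x ∈ Set.Ico (0:ℝ) 360 | ∀ j, f i x ≤ f j x})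
    (β₁ β₂ : ℝ) (h₁ : β₁ ∈ R) (h₂ : β₂ ∈ R) (hle : β₁ ≤ β₂) :
    Set.Icc β₁ β₂ ⊆ R ∨ (Set.Icc 0 β₁ ∪ Set.Ico β₂ 360) ⊆ R := by
  subst hR
  obtain ⟨⟨hb10, hb13⟩, H1⟩ := h₁
  obtain ⟨⟨hb20, hb23⟩, H2⟩ := h₂
  obtain ⟨hA0, hA3⟩ := hα i
  classical
  let γ : Fin k → ℝ := fun j =>
    if α j - α i ≤ -180 then α j - α i + 360
    else if 180 < α j - α i then α j - α i - 360 else α j - α i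
  have hγdef : ∀ j, γ j = if α j - α i ≤ -180 then α j - α i + 360
      else if 180 < α j - α i then α j - α i - 360 else α j - α i := fun j => rfl
  have hγrange : ∀ j, -180 ≤ γ j ∧ γ j ≤ 180 := by
    intro j
    obtain ⟨hj0, hj3⟩ := hα j
    rw [hγdef j]
    split_ifs with e1 e2 <;> constructor <;> linarith
  have hγi : γ i = 0 := by
    rw [hγdef i]
    split_ifs with e1 e2 <;> linarith
  have hfeq : ∀ (j : Fin k) (x s : ℝ), (s = 0 ∨ s = 360 ∨ s = -360) → 0 ≤ x → x < 360 →
      -180 ≤ x - α i + s → x - α i + s ≤ 180 →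
      f j x = D j + c_a (mind (x - α i + s - γ j)) := by
    intro j x s hs hx0 hx1 hu0 hu1
    obtain ⟨hj0, hj3⟩ := hα j
    obtain ⟨hg0, hg1⟩ := hγrange j
    have he : γ j - (α j - α i) = 0 ∨ γ j - (α j - α i) = 360 ∨ γ j - (α j - α i) = -360 := by
      rw [hγdef j]
      split_ifs <;>
        first
        | (left; ring1)
        | (right; left; ring1)
        | (right; right; ring1)
    rw [hf]
    congr 1
    rw [show min |x - α j| (360 - |x - α j|) = mind (x - α j) from rfl]
    congr 1
    apply mind_congr
    · rw [abs_le]; constructor <;> linarith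
    · rw [abs_le]; constructor <;> linarith
    · rcases he with he | he | he <;> rcases hs with hs | hs | hs <;>
        first
        | (left; linarith)
        | (right; left; linarith)
        | (right; right; left; linarith)
        | (right; right; right; left; linarith)
        | (right; right; right; right; linarith)
  have endpt : ∀ (β s : ℝ), (s = 0 ∨ s = 360 ∨ s = -360) → 0 ≤ β → β < 360 →
      -180 ≤ β - α i + s → β - α i + s ≤ 180 → (∀ j, f i β ≤ f j β) →
      ∀ j, c_a (mind (β - α i + s)) - c_a (mind (β - α i + s - γ j)) ≤ D j - D i := by
    intro β s hs hβ0 hβ1 hu0 hu1 H j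
    have hi := hfeq i β s hs hβ0 hβ1 hu0 hu1
    rw [hγi, sub_zero] at hi
    have hj := hfeq j β s hs hβ0 hβ1 hu0 hu1
    have hle' := H j
    rw [hi, hj] at hle'
    linarith
  have key : ∀ (x s a b : ℝ), (s = 0 ∨ s = 360 ∨ s = -360) → 0 ≤ x → x < 360 →
      -180 ≤ a → a ≤ x - α i + s → x - α i + s ≤ b → b ≤ 180 →
      (∀ j, c_a (mind a) - c_a (mind (a - γ j)) ≤ D j - D i) →
      (∀ j, c_a (mind b) - c_a (mind (b - γ j)) ≤ D j - D i) →
      ∀ j, f i x ≤ f j x := by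
    intro x s a b hs hx0 hx1 ha hau hub hb HA HB j
    have hu0 : -180 ≤ x - α i + s := le_trans ha hau
    have hu1 : x - α i + s ≤ 180 := le_trans hub hb
    have hi := hfeq i x s hs hx0 hx1 hu0 hu1
    rw [hγi, sub_zero] at hi
    have hj := hfeq j x s hs hx0 hx1 hu0 hu1
    rw [hi, hj]
    have hcore := core c_a hconv hmono (γ j) (hγrange j).1 (hγrange j).2 a b
      (x - α i + s) ha hb hau hub
    unfold hfun at hcore
    have hmax : max (c_a (mind a) - c_a (mind (a - γ j)))
        (c_a (mind b) - c_a (mind (b - γ j))) ≤ D j - D i := max_le (HA j) (HB j)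
    linarith [le_trans hcore hmax]
  rcases lt_or_ge (α i) 180 with hA | hA
  · by_cases hm : β₁ < α i + 180 ∧ α i + 180 < β₂
    · right
      obtain ⟨hm1, hm2⟩ := hm
      have HA := endpt β₂ (-360) (Or.inr (Or.inr rfl)) hb20 hb23 (by linarith) (by linarith) H2
      have HB := endpt β₁ 0 (Or.inl rfl) hb10 hb13 (by linarith) (by linarith) H1
      intro x hx
      rcases hx with hx | hx
      · obtain ⟨hx0, hx1⟩ := hx
        exact ⟨⟨hx0, by linarith⟩, key x 0 (β₂ - α i + -360) (β₁ - α i + 0) (Or.inl rfl)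
          hx0 (by linarith) (by linarith) (by linarith) (by linarith) (by linarith) HA HB⟩
      · obtain ⟨hx0, hx1⟩ := hx
        exact ⟨⟨by linarith, hx1⟩, key x (-360) (β₂ - α i + -360) (β₁ - α i + 0)
          (Or.inr (Or.inr rfl)) (by linarith) hx1 (by linarith) (by linarith) (by linarith)
          (by linarith) HA HB⟩
    · left
      push_neg at hm
      rcases le_or_gt (α i + 180) β₁ with hc | hc
      · have HA := endpt β₁ (-360) (Or.inr (Or.inr rfl)) hb10 hb13 (by linarith) (by linarith) H1
        have HB := endpt β₂ (-360) (Or.inr (Or.inr rfl)) hb20 hb23 (by linarith) (by linarith) H2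
        intro x hx
        obtain ⟨hx1, hx2⟩ := hx
        exact ⟨⟨by linarith, by linarith⟩, key x (-360) (β₁ - α i + -360) (β₂ - α i + -360)
          (Or.inr (Or.inr rfl)) (by linarith) (by linarith) (by linarith) (by linarith)
          (by linarith) (by linarith) HA HB⟩
      · have hcc : β₂ ≤ α i + 180 := hm hc
        have HA := endpt β₁ 0 (Or.inl rfl) hb10 hb13 (by linarith) (by linarith) H1
        have HB := endpt β₂ 0 (Or.inl rfl) hb20 hb23 (by linarith) (by linarith) H2
        intro x hx
        obtain ⟨hx1, hx2⟩ := hx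
        exact ⟨⟨by linarith, by linarith⟩, key x 0 (β₁ - α i + 0) (β₂ - α i + 0) (Or.inl rfl)
          (by linarith) (by linarith) (by linarith) (by linarith) (by linarith) (by linarith)
          HA HB⟩
  · by_cases hm : β₁ < α i - 180 ∧ α i - 180 < β₂
    · right
      obtain ⟨hm1, hm2⟩ := hm
      have HA := endpt β₂ 0 (Or.inl rfl) hb20 hb23 (by linarith) (by linarith) H2
      have HB := endpt β₁ 360 (Or.inr (Or.inl rfl)) hb10 hb13 (by linarith) (by linarith) H1
      intro x hx
      rcases hx with hx | hx
      · obtain ⟨hx0, hx1⟩ := hx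
        exact ⟨⟨hx0, by linarith⟩, key x 360 (β₂ - α i + 0) (β₁ - α i + 360)
          (Or.inr (Or.inl rfl)) hx0 (by linarith) (by linarith) (by linarith) (by linarith)
          (by linarith) HA HB⟩
      · obtain ⟨hx0, hx1⟩ := hx
        exact ⟨⟨by linarith, hx1⟩, key x 0 (β₂ - α i + 0) (β₁ - α i + 360) (Or.inl rfl)
          (by linarith) hx1 (by linarith) (by linarith) (by linarith) (by linarith) HA HB⟩
    · left
      push_neg at hm
      rcases le_or_gt (α i - 180) β₁ with hc | hc
      · have HA := endpt β₁ 0 (Or.inl rfl) hb10 hb13 (by linarith) (by linarith) H1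
        have HB := endpt β₂ 0 (Or.inl rfl) hb20 hb23 (by linarith) (by linarith) H2
        intro x hx
        obtain ⟨hx1, hx2⟩ := hx
        exact ⟨⟨by linarith, by linarith⟩, key x 0 (β₁ - α i + 0) (β₂ - α i + 0) (Or.inl rfl)
          (by linarith) (by linarith) (by linarith) (by linarith) (by linarith) (by linarith)
          HA HB⟩
      · have hcc : β₂ ≤ α i - 180 := hm hc
        have HA := endpt β₁ 360 (Or.inr (Or.inl rfl)) hb10 hb13 (by linarith) (by linarith) H1
        have HB := endpt β₂ 360 (Or.inr (Or.inl rfl)) hb20 hb23 (by linarith) (by linarith) H2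
        intro x hx
        obtain ⟨hx1, hx2⟩ := hx
        exact ⟨⟨by linarith, by linarith⟩, key x 360 (β₁ - α i + 360) (β₂ - α i + 360)
          (Or.inr (Or.inl rfl)) (by linarith) (by linarith) (by linarith) (by linarith)
          (by linarith) (by linarith) HA HB⟩
end

section
/- Let c_a : [0,180] → ℝ be monotonically increasing, D₁ ≤ D_i for all i, and f_i(x) = D_i + c_a(|x - α_i|_m). If f_i((α₁ + 180) mod 360) ≥ f₁((α₁ + 180) mod 360), and c_a is convex, then f₁(x) ≤ f_i(x) for all x, i.e., edge 1 dominates edge i everywhere. -/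
/-- Superadditivity of increments for a convex function on [0,180]. -/
lemma conv_shift (c : ℝ → ℝ) (hconv : ConvexOn ℝ (Set.Icc (0:ℝ) 180) c)
    (a b : ℝ) (hb0 : 0 ≤ b) (hba : b ≤ a) (ha180 : a ≤ 180) :
    c a + c (180 - a + b) ≤ c b + c 180 := by
  rcases eq_or_lt_of_le (le_trans hba ha180) with hb180 | hb180
  · have : a = 180 := le_antisymm ha180 (hb180 ▸ hba)
    rw [this, ← hb180]; ring_nf; simp
  · set lam : ℝ := (180 - a) / (180 - b) with hlam
    have hden : (0:ℝ) < 180 - b := by linarith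
    have hlam0 : 0 ≤ lam := div_nonneg (by linarith) (le_of_lt hden)
    have hlam1 : lam ≤ 1 := by
      rw [hlam, div_le_one hden]; linarith
    have hbmem : b ∈ Set.Icc (0:ℝ) 180 := ⟨hb0, by linarith⟩
    have h180mem : (180:ℝ) ∈ Set.Icc (0:ℝ) 180 := ⟨by norm_num, le_refl _⟩
    have e1 := hconv.2 hbmem h180mem hlam0 (by linarith : (0:ℝ) ≤ 1 - lam) (by ring)
    have e2 := hconv.2 hbmem h180mem (by linarith : (0:ℝ) ≤ 1 - lam) hlam0 (by ring)
    simp only [smul_eq_mul] at e1 e2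
    have hp1 : lam * b + (1 - lam) * 180 = a := by
      rw [hlam]; field_simp; ring
    have hp2 : (1 - lam) * b + lam * 180 = 180 - a + b := by
      rw [hlam]; field_simp; ring
    rw [hp1] at e1; rw [hp2] at e2
    linarith

theorem dominance_everywhere_of_dominance_at_opposite
    (c_a : ℝ → ℝ)
    (hconv : ConvexOn ℝ (Set.Icc (0:ℝ) 180) c_a)
    (hmono : MonotoneOn c_a (Set.Icc (0:ℝ) 180))
    (D₁ Di : ℝ) (hD : D₁ ≤ Di)
    (α₁ αi : ℝ) (hα₁ : α₁ ∈ Set.Ico (0:ℝ) 360) (hαi : αi ∈ Set.Ico (0:ℝ) 360)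
    (f₁ fi : ℝ → ℝ)
    (hf₁ : ∀ x, f₁ x = D₁ + c_a (min |x - α₁| (360 - |x - α₁|)))
    (hfi : ∀ x, fi x = Di + c_a (min |x - αi| (360 - |x - αi|)))
    (op : ℝ) (hop : op = if α₁ + 180 < 360 then α₁ + 180 else α₁ - 180)
    (h : f₁ op ≤ fi op) :
    ∀ x ∈ Set.Ico (0:ℝ) 360, f₁ x ≤ fi x := by
  obtain ⟨hα₁0, hα₁1⟩ := hα₁
  obtain ⟨hαi0, hαi1⟩ := hαi
  intro x hx
  obtain ⟨hx0, hx1⟩ := hx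
  rw [hf₁, hfi]
  rw [hf₁, hfi] at h
  -- op facts
  have hopabs : |op - α₁| = 180 := by
    rw [hop]; split_ifs with hc
    · rw [abs_of_nonneg (by linarith)]; ring
    · rw [abs_of_nonpos (by linarith)]; ring
  have hop0 : 0 ≤ op := by rw [hop]; split_ifs with hc <;> [linarith; linarith]
  have hop1 : op < 360 := by rw [hop]; split_ifs with hc <;> [linarith; linarith]
  have h180 : min |op - α₁| (360 - |op - α₁|) = 180 := by rw [hopabs]; norm_num
  rw [h180] at h
  set a := min |x - α₁| (360 - |x - α₁|) with hadef
  set b := min |x - αi| (360 - |x - αi|) with hbdef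
  set e := min |op - αi| (360 - |op - αi|) with hedef
  -- membership
  have habs1 : |x - α₁| ≤ 360 := by rw [abs_le]; constructor <;> linarith
  have habs2 : |x - αi| ≤ 360 := by rw [abs_le]; constructor <;> linarith
  have habs3 : |op - αi| ≤ 360 := by rw [abs_le]; constructor <;> linarith
  have haI : a ∈ Set.Icc (0:ℝ) 180 := by
    constructor
    · exact le_min (abs_nonneg _) (by linarith)
    · rcases le_total |x - α₁| 180 with hh | hh
      · exact le_trans (min_le_left _ _) hh
      · exact le_trans (min_le_right _ _) (by linarith)
  have hbI : b ∈ Set.Icc (0:ℝ) 180 := by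
    constructor
    · exact le_min (abs_nonneg _) (by linarith)
    · rcases le_total |x - αi| 180 with hh | hh
      · exact le_trans (min_le_left _ _) hh
      · exact le_trans (min_le_right _ _) (by linarith)
  have heI : e ∈ Set.Icc (0:ℝ) 180 := by
    constructor
    · exact le_min (abs_nonneg _) (by linarith)
    · rcases le_total |op - αi| 180 with hh | hh
      · exact le_trans (min_le_left _ _) hh
      · exact le_trans (min_le_right _ _) (by linarith)
  -- key triangle-type inequality
  have key : a + e ≤ 180 + b := by
    have h1 : a ≤ |x - α₁| := min_le_left _ _
    have h2 : a ≤ 360 - |x - α₁| := min_le_right _ _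
    have h3 : e ≤ |op - αi| := min_le_left _ _
    have h4 : e ≤ 360 - |op - αi| := min_le_right _ _
    rcases lt_or_ge (α₁ + 180) 360 with hc | hc <;>
      [rw [if_pos hc] at hop; rw [if_neg (not_lt.mpr hc)] at hop] <;>
      subst hop <;>
      rcases min_cases |x - αi| (360 - |x - αi|) with ⟨hb1, hb2⟩ | ⟨hb1, hb2⟩ <;>
      rw [← hbdef] at hb1 <;>
      rcases abs_cases (x - α₁) with ⟨hs1, hs1'⟩ | ⟨hs1, hs1'⟩ <;>
      rcases abs_cases (x - αi) with ⟨hs2, hs2'⟩ | ⟨hs2, hs2'⟩ <;>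
      first
        | (rcases abs_cases (α₁ + 180 - αi) with ⟨hs3, hs3'⟩ | ⟨hs3, hs3'⟩ <;> linarith)
        | (rcases abs_cases (α₁ - 180 - αi) with ⟨hs3, hs3'⟩ | ⟨hs3, hs3'⟩ <;> linarith)
  rcases le_total a b with hab | hab
  · have := hmono haI hbI hab
    linarith
  · have he' : (180 - a + b) ∈ Set.Icc (0:ℝ) 180 := by
      constructor <;> [linarith [hbI.1, haI.2]; linarith]
    have hee : c_a e ≤ c_a (180 - a + b) := hmono heI he' (by linarith)
    have hcs := conv_shift c_a hconv a b hbI.1 hab haI.2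
    linarith
end
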